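/- arXiv:1009.2854 — 10 statements merged into one kernel-verified Lean document; each statement's English description precedes it below -/
import Mathlib

section
/- Let M be a monoid and n a positive integer such that m^(n+1) = m^n for all m ∈ M (M is aperiodic). Then for all m, m' ∈ M, if m ∼_R m' and m ∼_L m', then m = m'. -/
/-- Green's right preorder: `m ≤_R m'` iff `m = m' * k` for some `k`. -/
def rLe {M : Type*} [Monoid M] (m m' : M) : Prop := ∃ k, m = m' * k

/-- Green's right equivalence `∼_R`. -/
def rEquiv {M : Type*} [Monoid M] (m m' : M) : Prop := rLe m m' ∧ rLe m' m

/-- Green's left preorder: `m ≤_L m'` iff `m = k * m'` for some `k`. -/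
def lLe {M : Type*} [Monoid M] (m m' : M) : Prop := ∃ k, m = k * m'

/-- Green's left equivalence `∼_L`. -/
def lEquiv {M : Type*} [Monoid M] (m m' : M) : Prop := lLe m m' ∧ lLe m' m

/-- In an aperiodic monoid (`m^(n+1) = m^n` for all `m`), if `m ∼_R m'` and `m ∼_L m'`
then `m = m'`. -/
theorem aperiodic_rEquiv_lEquiv_eq {M : Type*} [Monoid M] (n : ℕ) (hn : 0 < n)
    (hap : ∀ m : M, m ^ (n + 1) = m ^ n)
    (m m' : M) (hR : rEquiv m m') (hL : lEquiv m m') : m = m' := by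
  obtain ⟨u, hu⟩ := hR.2      -- m' = m * u
  obtain ⟨w, hw⟩ := hL.1      -- m = w * m'
  have key : m = w * m * u := by
    calc m = w * m' := hw
    _ = w * (m * u) := by rw [hu]
    _ = w * m * u := by rw [mul_assoc]
  have pow : ∀ k : ℕ, m = w ^ k * m * u ^ k := by
    intro k
    induction k with
    | zero => simp
    | succ k ih =>
      calc m = w * m * u := key
      _ = w * (w ^ k * m * u ^ k) * u := by rw [← ih]
      _ = w ^ (k + 1) * m * u ^ (k + 1) := by
          rw [pow_succ' w, pow_succ u]; simp [mul_assoc]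
  calc m = w ^ n * m * u ^ n := pow n
  _ = w ^ n * m * u ^ (n + 1) := by rw [hap]
  _ = w ^ n * m * u ^ n * u := by rw [pow_succ]; simp [mul_assoc]
  _ = m * u := by rw [← pow n]
  _ = m' := hu.symm
end

section
/- Let M be a finite monoid with idempotent exponent n satisfying the DA identity for n. Then for all m, p, k ∈ M: if m ∼_R p and m ∼_R m*k, then p*k ∼_R p. -/
/-- In a finite monoid with idempotent exponent `n` satisfying the DA identity for `n`:
if `m ∼_R p` and `m ∼_R m*k`, then `p*k ∼_R p`. -/
theorem rEquiv_mul_of_rEquiv {M : Type*} [Monoid M] [Finite M] (n : ℕ) (hn : 0 < n)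
    (hidem : ∀ x : M, x ^ n * x ^ n = x ^ n)
    (hDA : ∀ m k : M, (m * k) ^ n * m * (m * k) ^ n = (m * k) ^ n)
    (m p k : M) (h₁ : rEquiv m p) (h₂ : rEquiv m (m * k)) : rEquiv (p * k) p := by
  obtain ⟨⟨a, ha⟩, ⟨b, hb⟩⟩ := h₁
  obtain ⟨⟨c, hc⟩, -⟩ := h₂
  -- the key cycle
  set g : M := k * c * b * a with hg
  have hmg : m * g = m := by
    have : m * g = m * k * c * b * a := by simp [hg, mul_assoc]
    rw [this, ← hc, ← hb, ← ha]
  have hmgn : ∀ j : ℕ, m * g ^ j = m := by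
    intro j
    induction j with
    | zero => simp
    | succ i ih => rw [pow_succ, ← mul_assoc, ih, hmg]
  have hda : g ^ n * (k * c * b) * g ^ n = g ^ n := hDA (k * c * b) a
  have hpg : m = p * g ^ n := by
    calc m = m * g ^ n := (hmgn n).symm
      _ = m * (g ^ n * (k * c * b) * g ^ n) := by rw [hda]
      _ = m * g ^ n * (k * c * b) * g ^ n := by simp [mul_assoc]
      _ = m * (k * c * b) * g ^ n := by rw [hmgn n]
      _ = m * k * c * b * g ^ n := by simp [mul_assoc]
      _ = p * g ^ n := by rw [← hc, ← hb]
  refine ⟨⟨k, rfl⟩, ⟨c * b * a * g ^ (n - 1) * b, ?_⟩⟩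
  have hgn : g ^ n = g * g ^ (n - 1) := by
    rw [← pow_succ', Nat.sub_add_cancel hn]
  calc p = m * b := hb
    _ = p * g ^ n * b := by rw [← hpg]
    _ = p * (g * g ^ (n - 1)) * b := by rw [hgn]
    _ = p * k * (c * b * a * g ^ (n - 1) * b) := by simp [hg, mul_assoc]
end

section
/- Let M be a finite monoid with idempotent exponent n satisfying the DA identity for n. Then for all x, y, z ∈ M: (x*y*z)^n * y * (x*y*z)^n = (x*y*z)^n. -/
private lemma shift_pow {M : Type*} [Monoid M] (a b : M) (n : ℕ) :
    (a * b) ^ n * a = a * (b * a) ^ n := by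
  induction n with
  | zero => simp
  | succ k ih => simp [pow_succ', mul_assoc, ih]

/-- In a finite monoid with idempotent exponent `n` satisfying the DA identity for `n`:
`(x*y*z)^n * y * (x*y*z)^n = (x*y*z)^n` for all `x, y, z`. -/
theorem da_middle_absorb {M : Type*} [Monoid M] [Finite M] (n : ℕ) (hn : 0 < n)
    (hidem : ∀ x : M, x ^ n * x ^ n = x ^ n)
    (hDA : ∀ m k : M, (m * k) ^ n * m * (m * k) ^ n = (m * k) ^ n)
    (x y z : M) : (x * y * z) ^ n * y * (x * y * z) ^ n = (x * y * z) ^ n := by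
  -- Step A: aperiodicity a^(n+1) = a^n
  have hap : ∀ a : M, a ^ (n + 1) = a ^ n := by
    intro a
    have h := hDA a 1
    simp only [mul_one] at h
    -- h : a^n * a * a^n = a^n
    calc a ^ (n + 1) = a * a ^ n := by rw [pow_succ']
      _ = a * (a ^ n * a ^ n) := by rw [hidem]
      _ = (a ^ n * a) * a ^ n := by
          rw [← mul_assoc, ← pow_succ', pow_succ]
      _ = a ^ n := h
  -- Step B: the suffix version of the DA identity
  have hL2 : ∀ a b : M, (a * b) ^ n * b * (a * b) ^ n = (a * b) ^ n := by
    intro a b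
    have hs1 : (a * b) ^ n * a = a * (b * a) ^ n := shift_pow a b n
    have hs2 : (b * a) ^ n * b = b * (a * b) ^ n := shift_pow b a n
    have hafb : a * (b * a) ^ n * b = (a * b) ^ n := by
      rw [← hs1, mul_assoc, ← pow_succ, hap]
    have hf : (b * a) ^ n * b * (b * a) ^ n = (b * a) ^ n := hDA b a
    have hef : (a * b) ^ n * (b * a) ^ n = (a * b) ^ n * a := by
      calc (a * b) ^ n * (b * a) ^ n
          = (a * (b * a) ^ n * b) * (b * a) ^ n := by rw [hafb]
        _ = a * ((b * a) ^ n * b * (b * a) ^ n) := by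
            simp only [mul_assoc]
        _ = a * (b * a) ^ n := by rw [hf]
        _ = (a * b) ^ n * a := hs1.symm
    calc (a * b) ^ n * b * (a * b) ^ n
        = (a * b) ^ n * (b * (a * b) ^ n) := by rw [mul_assoc]
      _ = (a * b) ^ n * ((b * a) ^ n * b) := by rw [hs2]
      _ = ((a * b) ^ n * (b * a) ^ n) * b := by rw [mul_assoc]
      _ = (a * b) ^ n * a * b := by rw [hef]
      _ = (a * b) ^ (n + 1) := by rw [pow_succ, mul_assoc]
      _ = (a * b) ^ n := hap _
  -- Notation
  set e : M := (x * y * z) ^ n with he_def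
  -- e * (y*z) * e = e
  have h1 := hL2 x (y * z)
  rw [← mul_assoc x y z, ← he_def] at h1
  -- h1 : e * (y * z) * e = e
  have heyze : e * y * z * e = e := by
    calc e * y * z * e = e * (y * z) * e := by simp only [mul_assoc]
      _ = e := h1
  -- h := (e*y*z)^n absorbs into e on the right
  have hpow : ∀ k : ℕ, (e * y * z) ^ k * e = e := by
    intro k
    induction k with
    | zero => simp
    | succ m ih =>
        calc (e * y * z) ^ (m + 1) * e
            = (e * y * z) ^ m * (e * y * z * e) := by
              rw [pow_succ]; simp only [mul_assoc]
          _ = (e * y * z) ^ m * e := by rw [heyze]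
          _ = e := ih
  have hhe : (e * y * z) ^ n * e = e := hpow n
  have hDAh : (e * y * z) ^ n * (e * y) * (e * y * z) ^ n = (e * y * z) ^ n := by
    exact hDA (e * y) z
  calc e * y * e
      = ((e * y * z) ^ n * e) * y * ((e * y * z) ^ n * e) := by rw [hhe]
    _ = ((e * y * z) ^ n * (e * y) * (e * y * z) ^ n) * e := by
        simp only [mul_assoc]
    _ = (e * y * z) ^ n * e := by rw [hDAh]
    _ = e := hhe
end

section
/- Let A be an alphabet (an arbitrary type, possibly infinite), M a finite monoid with idempotent exponent n satisfying the DA identity for n, and β : A* → M a monoid morphism. Then for every m ∈ M, the language U_m = {w ∈ A* : m*β(w) ∼_R m} equals the set of all words w ∈ A* such that every letter a occurring in w satisfies m*β(a) ∼_R m. -/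
/-!
Since `m * x ≤_R m` always holds, `w ∈ U_m` iff `m ≤_R m * β w`. The DA identity lets a factor
be reinserted into an idempotent: `e * v * e = e` for `e = (u * v) ^ n`. So if
`m = m * a * b * c * k`, then `m` is fixed by `s ^ n` with `s = a * b * c * k`, and
`m = m * s ^ n * b * (c * k) * s ^ n` gives `m ≤_R m * b`: the letters of words in `U_m` qualify.
Conversely, from `m = m * x * k = m * y * q` one gets `m * x = m * x * k * y * (q * x)`, so
`m ≤_R m * x * y` by the same argument: the qualifying elements are closed under products.
-/

theorem rEquiv_mul_left_iff_rLe {M : Type*} [Monoid M] (m x : M) :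
    rEquiv (m * x) m ↔ rLe m (m * x) :=
  ⟨And.right, fun h => ⟨⟨x, rfl⟩, h⟩⟩

section DA

variable {M : Type*} [Monoid M] {n : ℕ}
  (hidem : ∀ x : M, x ^ n * x ^ n = x ^ n)
  (hDA : ∀ m k : M, (m * k) ^ n * m * (m * k) ^ n = (m * k) ^ n)
include hidem hDA

theorem pow_succ_eq_pow_of_da (x : M) : x ^ (n + 1) = x ^ n := by
  have hx : x ^ n * x * x ^ n = x ^ n := by simpa using hDA x 1
  calc x ^ (n + 1) = x * (x ^ n * x ^ n) := by rw [hidem, pow_succ']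
    _ = x ^ n * x * x ^ n := by rw [← mul_assoc, ← pow_succ', pow_succ]
    _ = x ^ n := hx

theorem mul_pow_mul_right_mul_pow_of_da (u v : M) :
    (u * v) ^ n * v * (u * v) ^ n = (u * v) ^ n := by
  have hconj : v * (u * v) ^ n = (v * u) ^ n * v :=
    (SemiconjBy.pow_right (by simp only [SemiconjBy, mul_assoc]) n : SemiconjBy v _ _)
  have hsplit : (u * v) ^ n = u * ((v * u) ^ n * v) := by
    rw [← pow_succ_eq_pow_of_da hidem hDA, pow_succ', mul_assoc, hconj]
  calc (u * v) ^ n * v * (u * v) ^ n = u * (((v * u) ^ n * v * (v * u) ^ n) * v) := by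
        rw [mul_assoc, hconj, hsplit]; simp only [mul_assoc]
    _ = (u * v) ^ n := by rw [hDA, hsplit]

theorem rLe_mul_of_rLe_mul_infix {m a b c : M} (h : rLe m (m * a * b * c)) :
    rLe m (m * b) := by
  obtain ⟨k, hk⟩ := h
  set s := a * b * c * k
  have hs : SemiconjBy m s 1 := by
    rw [SemiconjBy, one_mul]
    conv_rhs => rw [hk]
    simp only [s, mul_assoc]
  have hsn : m * s ^ n = m := by simpa [SemiconjBy] using hs.pow_right n
  have hins : s ^ n * (b * (c * k)) * s ^ n = s ^ n := by
    simpa only [s, mul_assoc] using mul_pow_mul_right_mul_pow_of_da hidem hDA a (b * (c * k))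
  refine ⟨c * k * s ^ n, ?_⟩
  calc m = m * (s ^ n * (b * (c * k)) * s ^ n) := by rw [hins, hsn]
    _ = m * s ^ n * b * (c * k * s ^ n) := by simp only [mul_assoc]
    _ = m * b * (c * k * s ^ n) := by rw [hsn]

theorem rLe_mul_mul_of_rLe_mul {m x y : M} (hx : rLe m (m * x)) (hy : rLe m (m * y)) :
    rLe m (m * (x * y)) := by
  obtain ⟨k, hk⟩ := hx
  obtain ⟨q, hq⟩ := hy
  have hxy : rLe (m * x) (m * x * y) := by
    refine rLe_mul_of_rLe_mul_infix hidem hDA (a := k) (c := q * x) ⟨1, ?_⟩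
    calc m * x = m * y * q * x := by rw [← hq]
      _ = m * x * k * y * q * x := by rw [← hk]
      _ = m * x * k * y * (q * x) * 1 := by simp only [mul_assoc, mul_one]
  obtain ⟨t, ht⟩ := hxy
  refine ⟨t * k, ?_⟩
  calc m = m * x * k := hk
    _ = m * x * y * t * k := by rw [← ht]
    _ = m * (x * y) * (t * k) := by simp only [mul_assoc]

theorem rLe_mul_iff_forall_mem_rLe_mul {A : Type*} (β : List A → M) (hβ1 : β [] = 1)
    (hβmul : ∀ u v : List A, β (u ++ v) = β u * β v) (m : M) (w : List A) :
    rLe m (m * β w) ↔ ∀ a ∈ w, rLe m (m * β [a]) := by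
  constructor
  · intro h a ha
    obtain ⟨u, v, rfl⟩ := List.append_of_mem ha
    rw [← List.singleton_append, hβmul, hβmul] at h
    simp only [← mul_assoc] at h
    exact rLe_mul_of_rLe_mul_infix hidem hDA h
  · induction w with
    | nil => exact fun _ => ⟨1, by rw [hβ1, mul_one, mul_one]⟩
    | cons a w ih =>
      intro hw
      rw [← List.singleton_append, hβmul]
      exact rLe_mul_mul_of_rLe_mul hidem hDA (hw a List.mem_cons_self)
        (ih fun b hb => hw b (List.mem_cons_of_mem a hb))

end DA

theorem ulang_eq_starLang_general {A M : Type*} [Monoid M] (n : ℕ)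
    (hidem : ∀ x : M, x ^ n * x ^ n = x ^ n)
    (hDA : ∀ m k : M, (m * k) ^ n * m * (m * k) ^ n = (m * k) ^ n)
    (β : List A → M) (hβ1 : β [] = 1)
    (hβmul : ∀ u v : List A, β (u ++ v) = β u * β v)
    (m : M) :
    {w : List A | rEquiv (m * β w) m} =
      {w : List A | ∀ a ∈ w, rEquiv (m * β [a]) m} := by
  ext w
  simp only [Set.mem_ofPred_eq, rEquiv_mul_left_iff_rLe]
  exact rLe_mul_iff_forall_mem_rLe_mul hidem hDA β hβ1 hβmul m w

/-- Let `β : A* → M` be a monoid morphism into a finite monoid with idempotent exponent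
`n` satisfying the DA identity for `n`. Then `U_m = {w : m·β(w) ∼_R m}` equals the set
of all words each of whose letters `a` satisfies `m·β(a) ∼_R m`. -/
theorem ulang_eq_starLang {A M : Type*} [Monoid M] [Finite M] (n : ℕ) (hn : 0 < n)
    (hidem : ∀ x : M, x ^ n * x ^ n = x ^ n)
    (hDA : ∀ m k : M, (m * k) ^ n * m * (m * k) ^ n = (m * k) ^ n)
    (β : List A → M) (hβ1 : β [] = 1)
    (hβmul : ∀ u v : List A, β (u ++ v) = β u * β v)
    (m : M) :
    {w : List A | rEquiv (m * β w) m} =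
      {w : List A | ∀ a ∈ w, rEquiv (m * β [a]) m} :=
  ulang_eq_starLang_general n hidem hDA β hβ1 hβmul m
end

section
/- Let M be a finite monoid with idempotent exponent n, equipped with a preorder ≼ making it a stratified monoid, and suppose M satisfies the DA identity for n. Then for every m ∈ M, the set N = {y ∈ M : m*y ∼_R m} is downward closed under ≼: if m*y ∼_R m and z ≼ y, then m*z ∼_R m. -/
private theorem idem_pow' {M : Type*} [Monoid M] {b : M} (hb : b * b = b) {n : ℕ}
    (hn : 0 < n) : b ^ n = b := by
  obtain ⟨k, rfl⟩ : ∃ k, n = k + 1 := ⟨n - 1, by omega⟩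
  clear hn
  induction k with
  | zero => simp
  | succ k ih => rw [pow_succ, ih, hb]

/-- Extraction lemma (a form of the `DA` characterization): if `e` is idempotent
and `e = s * (x * t)` with `t * e = t`, then `e = e * (x * t)`. -/
private theorem extract {M : Type*} [Monoid M] (n : ℕ) (hn : 0 < n)
    (hDA : ∀ m k : M, (m * k) ^ n * m * (m * k) ^ n = (m * k) ^ n)
    (e s x t : M) (he : e * e = e) (hd : s * (x * t) = e) (ht : t * e = t) :
    e * (x * t) = e := by
  have hP2 : (x * (t * s)) * (x * (t * s)) = x * (t * s) := by
    calc (x * (t * s)) * (x * (t * s))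
        = x * (t * ((s * (x * t)) * s)) := by simp only [mul_assoc]
      _ = x * (t * (e * s)) := by rw [hd]
      _ = x * ((t * e) * s) := by simp only [mul_assoc]
      _ = x * (t * s) := by rw [ht]
  have hPn : (x * (t * s)) ^ n = x * (t * s) := idem_pow' hP2 hn
  have hPxP : (x * (t * s)) * (x * t) * (x * (t * s)) = x * (t * s) := by
    have h := hDA (x * t) s
    rw [show (x * t) * s = x * (t * s) from by rw [mul_assoc]] at h
    rw [hPn] at h
    exact h
  have he3 : e = s * ((x * (t * s)) * (x * t)) := by
    calc e = e * (e * e) := by rw [he, he]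
      _ = (s * (x * t)) * ((s * (x * t)) * (s * (x * t))) := by rw [hd]
      _ = s * (((x * (t * s)) * (x * (t * s))) * (x * t)) := by simp only [mul_assoc]
      _ = s * ((x * (t * s)) * (x * t)) := by rw [hP2]
  have key : e = e * (x * t) := by
    calc e = s * ((x * (t * s)) * (x * t)) := he3
      _ = s * (((x * (t * s)) * (x * t) * (x * (t * s))) * (x * t)) := by rw [hPxP]
      _ = (s * ((x * (t * s)) * (x * t))) * ((x * (t * s)) * (x * t)) := by
            simp only [mul_assoc]
      _ = e * ((x * (t * s)) * (x * t)) := by rw [← he3]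
      _ = e * (x * (t * (s * (x * t)))) := by simp only [mul_assoc]
      _ = e * (x * (t * e)) := by rw [hd]
      _ = e * (x * t) := by rw [ht]
  exact key.symm

/-- If `e` is idempotent and `e * y * e = e`, then `e * y ^ (k+1) * e = e`. -/
private theorem pow_sandwich {M : Type*} [Monoid M] (n : ℕ) (hn : 0 < n)
    (hDA : ∀ m k : M, (m * k) ^ n * m * (m * k) ^ n = (m * k) ^ n)
    (e y : M) (he : e * e = e) (h1 : e * y * e = e) :
    ∀ k, e * y ^ (k + 1) * e = e := by
  intro k
  induction k with
  | zero => simpa using h1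
  | succ k ih =>
    have hb : (y ^ (k + 1) * e) * (y ^ (k + 1) * e) = y ^ (k + 1) * e := by
      calc (y ^ (k + 1) * e) * (y ^ (k + 1) * e)
          = y ^ (k + 1) * (e * y ^ (k + 1) * e) := by simp only [mul_assoc]
        _ = y ^ (k + 1) * e := by rw [ih]
    have hDAb := hDA y (y ^ k * e)
    have hyk : y * (y ^ k * e) = y ^ (k + 1) * e := by rw [← mul_assoc, ← pow_succ']
    rw [hyk, idem_pow' hb hn] at hDAb
    have h1' : e * ((y ^ (k + 1) * e) * y * (y ^ (k + 1) * e)) = e := by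
      rw [hDAb, ← mul_assoc]; exact ih
    have h2 : e * ((y ^ (k + 1) * e) * y * (y ^ (k + 1) * e)) = e * y ^ (k + 1 + 1) * e := by
      calc e * ((y ^ (k + 1) * e) * y * (y ^ (k + 1) * e))
          = (e * y ^ (k + 1) * e) * (y * (y ^ (k + 1) * e)) := by simp only [mul_assoc]
        _ = e * (y * (y ^ (k + 1) * e)) := by rw [ih]
        _ = (e * (y * y ^ (k + 1))) * e := by simp only [mul_assoc]
        _ = e * y ^ (k + 1 + 1) * e := by rw [← pow_succ']
    rw [← h2]; exact h1'

/-- In a finite stratified monoid with idempotent exponent `n` satisfying the DA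
identity for `n`, the set `N = {y : m*y ∼_R m}` is downward closed under the
stratification preorder `≼`: if `m*y ∼_R m` and `z ≼ y` then `m*z ∼_R m`. -/
theorem stratified_rEquiv_downward_closed {M : Type*} [Monoid M] [Finite M]
    (n : ℕ) (hn : 0 < n)
    (hidem : ∀ x : M, x ^ n * x ^ n = x ^ n)
    (r : M → M → Prop)
    (hrefl : ∀ x : M, r x x)
    (htrans : ∀ x y z : M, r x y → r y z → r x z)
    (hstrat : ∀ m k : M, r k m → m ^ n * k * m ^ n = m ^ n)
    (hDA : ∀ m k : M, (m * k) ^ n * m * (m * k) ^ n = (m * k) ^ n)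
    (m : M) :
    ∀ y z : M, rEquiv (m * y) m → r z y → rEquiv (m * z) m := by
  intro y z hy hzy
  obtain ⟨-, u, hu⟩ := hy
  -- `hu : m = m * y * u`
  have he : (y * u) ^ n * (y * u) ^ n = (y * u) ^ n := hidem (y * u)
  have heye : (y * u) ^ n * y * (y * u) ^ n = (y * u) ^ n := hDA y u
  have hsand := pow_sandwich n hn hDA ((y * u) ^ n) y he heye
  have hyn : (y * u) ^ n * y ^ n * (y * u) ^ n = (y * u) ^ n := by
    obtain ⟨k, hk⟩ : ∃ k, n = k + 1 := ⟨n - 1, by omega⟩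
    have h := hsand k
    rw [← hk] at h
    exact h
  have hme : m * (y * u) ^ n = m := by
    have hall : ∀ j, m * (y * u) ^ j = m := by
      intro j
      induction j with
      | zero => rw [pow_zero, mul_one]
      | succ j ih => rw [pow_succ, ← mul_assoc, ih, ← mul_assoc]; exact hu.symm
    exact hall n
  have hz := hstrat y z hzy
  have hd : ((y * u) ^ n * y ^ n) * (z * (y ^ n * (y * u) ^ n)) = (y * u) ^ n := by
    calc ((y * u) ^ n * y ^ n) * (z * (y ^ n * (y * u) ^ n))
        = (y * u) ^ n * (y ^ n * z * y ^ n) * (y * u) ^ n := by simp only [mul_assoc]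
      _ = (y * u) ^ n * y ^ n * (y * u) ^ n := by rw [hz]
      _ = (y * u) ^ n := hyn
  have ht : (y ^ n * (y * u) ^ n) * (y * u) ^ n = y ^ n * (y * u) ^ n := by
    rw [mul_assoc, he]
  have hext : (y * u) ^ n * (z * (y ^ n * (y * u) ^ n)) = (y * u) ^ n :=
    extract n hn hDA ((y * u) ^ n) ((y * u) ^ n * y ^ n) z (y ^ n * (y * u) ^ n) he hd ht
  refine ⟨⟨z, rfl⟩, ⟨y ^ n * (y * u) ^ n, ?_⟩⟩
  calc m = m * (y * u) ^ n := hme.symm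
    _ = m * ((y * u) ^ n * (z * (y ^ n * (y * u) ^ n))) := by rw [hext]
    _ = (m * (y * u) ^ n) * (z * (y ^ n * (y * u) ^ n)) := by simp only [mul_assoc]
    _ = m * (z * (y ^ n * (y * u) ^ n)) := by rw [hme]
    _ = m * z * (y ^ n * (y * u) ^ n) := by rw [mul_assoc]
end

section
/- Let A be an alphabet (an arbitrary type, possibly infinite), M a finite monoid with idempotent exponent n satisfying the DA identity for n, and β : A* → M a monoid morphism. Then for all m, m' ∈ M with m ∼_R m', the languages U_m and U_{m'} are equal: {w ∈ A* : m*β(w) ∼_R m} = {w ∈ A* : m'*β(w) ∼_R m'}. -/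
/-- The language `U_m = {w ∈ A* : m·β(w) ∼_R m}`. -/
def Ulang {A M : Type*} [Monoid M] (β : List A → M) (m : M) : Set (List A) :=
  {w | rEquiv (m * β w) m}

private lemma pow_stab {M : Type*} [Monoid M] {m s : M} (h : m * s = m) :
    ∀ j : ℕ, m * s ^ j = m := by
  intro j
  induction j with
  | zero => simp
  | succ j ih => rw [pow_succ, ← mul_assoc, ih, h]

/-- The suffix version of the DA identity, derived from the prefix version. -/
private lemma suffix_DA {M : Type*} [Monoid M] (n : ℕ) (hn : 0 < n)
    (hidem : ∀ x : M, x ^ n * x ^ n = x ^ n)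
    (hDA : ∀ m k : M, (m * k) ^ n * m * (m * k) ^ n = (m * k) ^ n)
    (a b : M) : (a * b) ^ n * b * (a * b) ^ n = (a * b) ^ n := by
  obtain ⟨p, rfl⟩ := Nat.exists_eq_succ_of_ne_zero hn.ne'
  have hbE : b * (a * b) ^ (p + 1) = (b * a) ^ (p + 1) * b :=
    SemiconjBy.pow_right (mul_assoc b a b).symm (p + 1)
  have haF : a * (b * a) ^ p = (a * b) ^ p * a :=
    SemiconjBy.pow_right (mul_assoc a b a).symm p
  have hsplit : a * (b * a) ^ p * b = (a * b) ^ (p + 1) := by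
    rw [haF, pow_succ, mul_assoc]
  have hFbF : (b * a) ^ (p + 1) * b * (b * a) ^ (p + 1) = (b * a) ^ (p + 1) := hDA b a
  have hE2 : (a * b) ^ (p + 1) = a * (b * a) ^ p * ((b * a) ^ (p + 1) * b) := by
    calc (a * b) ^ (p + 1) = (a * b) ^ (p + 1) * (a * b) ^ (p + 1) := (hidem _).symm
      _ = a * (b * a) ^ p * b * (a * b) ^ (p + 1) := by rw [hsplit]
      _ = a * (b * a) ^ p * (b * (a * b) ^ (p + 1)) := by rw [mul_assoc]
      _ = a * (b * a) ^ p * ((b * a) ^ (p + 1) * b) := by rw [hbE]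
  have hEFb : (a * b) ^ (p + 1) * ((b * a) ^ (p + 1) * b) = (a * b) ^ (p + 1) := by
    calc (a * b) ^ (p + 1) * ((b * a) ^ (p + 1) * b)
        = a * (b * a) ^ p * ((b * a) ^ (p + 1) * b) * ((b * a) ^ (p + 1) * b) := by
          rw [← hE2]
      _ = a * (b * a) ^ p *
          (((b * a) ^ (p + 1) * b) * ((b * a) ^ (p + 1) * b)) := by
          rw [mul_assoc]
      _ = a * (b * a) ^ p *
          ((b * a) ^ (p + 1) * b * (b * a) ^ (p + 1) * b) := by
          rw [mul_assoc ((b * a) ^ (p + 1) * b) ((b * a) ^ (p + 1)) b]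
      _ = a * (b * a) ^ p * ((b * a) ^ (p + 1) * b) := by rw [hFbF]
      _ = (a * b) ^ (p + 1) := hE2.symm
  calc (a * b) ^ (p + 1) * b * (a * b) ^ (p + 1)
      = (a * b) ^ (p + 1) * (b * (a * b) ^ (p + 1)) := by rw [mul_assoc]
    _ = (a * b) ^ (p + 1) * ((b * a) ^ (p + 1) * b) := by rw [hbE]
    _ = (a * b) ^ (p + 1) := hEFb

/-- If `m ∼_R m'` and `m·x ∼_R m`, then `m'·x ∼_R m'`. -/
private lemma key_step {M : Type*} [Monoid M] (n : ℕ) (hn : 0 < n)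
    (hidem : ∀ x : M, x ^ n * x ^ n = x ^ n)
    (hDA : ∀ m k : M, (m * k) ^ n * m * (m * k) ^ n = (m * k) ^ n)
    (m m' x : M) (h : rEquiv m m') (hx : rEquiv (m * x) m) :
    rEquiv (m' * x) m' := by
  obtain ⟨⟨k, hk⟩, ⟨l, hl⟩⟩ := h
  obtain ⟨-, ⟨y, hy⟩⟩ := hx
  refine ⟨⟨x, rfl⟩, ?_⟩
  -- hk : m = m' * k, hl : m' = m * l, hy : m = m * x * y
  have hmlk : m * (l * k) = m := by rw [← mul_assoc, ← hl, ← hk]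
  have hmW : m * (l * k) ^ n = m := pow_stab hmlk n
  have hWlW : (l * k) ^ n * l * (l * k) ^ n = (l * k) ^ n := hDA l k
  have hmlW : m * (l * (l * k) ^ n) = m := by
    calc m * (l * (l * k) ^ n) = (m * (l * k) ^ n) * (l * (l * k) ^ n) := by rw [hmW]
      _ = m * ((l * k) ^ n * (l * (l * k) ^ n)) := by rw [mul_assoc]
      _ = m * ((l * k) ^ n * l * (l * k) ^ n) := by rw [mul_assoc ((l * k) ^ n) l]
      _ = m * (l * k) ^ n := by rw [hWlW]
      _ = m := hmW
  have hm'W : m' * (l * k) ^ n = m := by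
    rw [hl, mul_assoc]; exact hmlW
  have hmb : m * (x * (y * l)) = m' := by
    calc m * (x * (y * l)) = m * x * (y * l) := by rw [mul_assoc]
      _ = m * x * y * l := by rw [mul_assoc (m * x) y l]
      _ = m * l := by rw [← hy]
      _ = m' := hl.symm
  have hstab : m' * ((l * k) ^ n * (x * (y * l))) = m' := by
    rw [← mul_assoc, hm'W, hmb]
  have hm'S : m' * ((l * k) ^ n * (x * (y * l))) ^ n = m' := pow_stab hstab n
  have hSbS : ((l * k) ^ n * (x * (y * l))) ^ n * (x * (y * l)) *
      ((l * k) ^ n * (x * (y * l))) ^ n = ((l * k) ^ n * (x * (y * l))) ^ n :=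
    suffix_DA n hn hidem hDA ((l * k) ^ n) (x * (y * l))
  refine ⟨y * l * ((l * k) ^ n * (x * (y * l))) ^ n, ?_⟩
  set S := ((l * k) ^ n * (x * (y * l))) ^ n with hSdef
  calc m' = m' * S := hm'S.symm
    _ = m' * (S * (x * (y * l)) * S) := by rw [hSbS]
    _ = m' * (S * (x * (y * l))) * S := by rw [← mul_assoc]
    _ = m' * S * (x * (y * l)) * S := by rw [mul_assoc m' S]
    _ = m' * (x * (y * l)) * S := by rw [hm'S]
    _ = m' * x * (y * l) * S := by rw [mul_assoc m' x]
    _ = m' * x * (y * l * S) := by rw [mul_assoc (m' * x)]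

/-- Let `β : A* → M` be a monoid morphism into a finite monoid with idempotent exponent
`n` satisfying the DA identity for `n`. If `m ∼_R m'` then `U_m = U_{m'}`. -/
theorem ulang_eq_of_rEquiv {A M : Type*} [Monoid M] [Finite M] (n : ℕ) (hn : 0 < n)
    (hidem : ∀ x : M, x ^ n * x ^ n = x ^ n)
    (hDA : ∀ m k : M, (m * k) ^ n * m * (m * k) ^ n = (m * k) ^ n)
    (β : List A → M) (hβ1 : β [] = 1)
    (hβmul : ∀ u v : List A, β (u ++ v) = β u * β v)
    (m m' : M) (h : rEquiv m m') :
    Ulang β m = Ulang β m' := by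
  ext w
  simp only [Ulang, Set.mem_setOf_eq]
  constructor
  · intro hw
    exact key_step n hn hidem hDA m m' (β w) h hw
  · intro hw
    exact key_step n hn hidem hDA m' m (β w) ⟨h.2, h.1⟩ hw
end

section
/- Let V be a finite monoid acting on a set H, n an idempotent exponent of V, and ≼ a relation on V satisfying (i) v ≼ u*v*w for all u, v, w ∈ V and (ii) the Δ₂ identity v^n * w * v^n = v^n whenever w ≼ v. Then: (a) for all h, h' ∈ H, if h ∼ h' then stab(h) = stab(h'); and (b) for every h ∈ H, stab(h) is a submonoid of V, i.e., 1 ∈ stab(h) and v, v' ∈ stab(h) implies v*v' ∈ stab(h). -/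
/-- `h` is reachable from `g` (via the action of `V`): `h = v • g` for some `v ∈ V`. -/
def reach (V : Type*) {H : Type*} [Monoid V] [MulAction V H] (g h : H) : Prop :=
  ∃ v : V, h = v • g

/-- `h ∼ g`: each of `h`, `g` is reachable from the other. -/
def simH (V : Type*) {H : Type*} [Monoid V] [MulAction V H] (h g : H) : Prop :=
  reach V g h ∧ reach V h g

/-- The stabilizer of `h`: context types `v` with `v • h ∼ h`. -/
def stab (V : Type*) {H : Type*} [Monoid V] [MulAction V H] (h : H) : Set V :=
  {v : V | simH V (v • h) h}

/-- Let `V` be a finite monoid acting on a set `H`, `n` an idempotent exponent of `V`,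
and `≼` a relation on `V` with `v ≼ u*v*w` for all `u,v,w` and satisfying the Δ₂
identity `v^n * w * v^n = v^n` whenever `w ≼ v`. Then (a) `h ∼ h'` implies
`stab(h) = stab(h')`, and (b) each `stab(h)` is a submonoid of `V`. -/
theorem stab_eq_of_sim_and_submonoid {V H : Type*} [Monoid V] [Finite V]
    [MulAction V H]
    (n : ℕ) (hn : 0 < n)
    (hidem : ∀ x : V, x ^ n * x ^ n = x ^ n)
    (r : V → V → Prop)
    (hpiece : ∀ u v w : V, r v (u * v * w))
    (hΔ : ∀ v w : V, r w v → v ^ n * w * v ^ n = v ^ n) :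
    (∀ h h' : H, simH V h h' → stab V h = stab V h') ∧
    (∀ h : H, (1 : V) ∈ stab V h ∧
      ∀ v v' : V, v ∈ stab V h → v' ∈ stab V h → v * v' ∈ stab V h) := by
  have hpow : ∀ (x : V) (h : H), x • h = h → ∀ m : ℕ, x ^ m • h = h := by
    intro x h hx m
    induction m with
    | zero => simp
    | succ k ih => rw [pow_succ, mul_smul, hx, ih]
  have key : ∀ (h : H) (v x : V), r v x → x • h = h → v ∈ stab V h := by
    intro h v x hr hx
    have hxn : x ^ n • h = h := hpow x h hx n
    have h1 : (x ^ n * v) • h = h := by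
      calc (x ^ n * v) • h = (x ^ n * v) • (x ^ n • h) := by rw [hxn]
        _ = (x ^ n * v * x ^ n) • h := by rw [mul_smul (x ^ n * v)]
        _ = x ^ n • h := by rw [hΔ x v hr]
        _ = h := hxn
    exact ⟨⟨v, rfl⟩, ⟨x ^ n, by rw [← mul_smul, h1]⟩⟩
  have mono : ∀ h h' : H, simH V h h' → stab V h ⊆ stab V h' := by
    rintro h h' ⟨⟨a, ha⟩, ⟨b, hb⟩⟩ v hv
    obtain ⟨w, hw⟩ := hv.2
    apply key h' v (b * (w * (v * a)))
    · simpa [mul_assoc] using hpiece (b * w) v a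
    · rw [mul_smul, mul_smul, mul_smul, ← ha, ← hw, ← hb]
  have hsymm : ∀ h h' : H, simH V h h' → simH V h' h := fun h h' hs => ⟨hs.2, hs.1⟩
  have parta : ∀ h h' : H, simH V h h' → stab V h = stab V h' :=
    fun h h' hs => Set.Subset.antisymm (mono h h' hs) (mono h' h (hsymm h h' hs))
  have htrans : ∀ a b c : H, simH V a b → simH V b c → simH V a c := by
    rintro a b c ⟨⟨u, hu⟩, ⟨w, hw⟩⟩ ⟨⟨p, hp⟩, ⟨q, hq⟩⟩
    exact ⟨⟨u * p, by rw [hu, hp, mul_smul]⟩, ⟨q * w, by rw [hq, hw, mul_smul]⟩⟩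
  refine ⟨parta, fun h => ⟨?_, ?_⟩⟩
  · show simH V ((1 : V) • h) h
    rw [one_smul]
    exact ⟨⟨1, (one_smul V h).symm⟩, ⟨1, (one_smul V h).symm⟩⟩
  · intro v v' hv hv'
    have hv'sim : simH V (v' • h) h := hv'
    have : v ∈ stab V (v' • h) := by rw [parta (v' • h) h hv'sim]; exact hv
    show simH V ((v * v') • h) h
    rw [mul_smul]
    exact htrans _ _ _ this hv'sim
end

section
/- Let V be a finite monoid acting on a set H, n an idempotent exponent of V, and ≼ a transitive relation on V satisfying (i) v ≼ u*v*w for all u, v, w ∈ V and (ii) the Δ₂ identity v^n * w * v^n = v^n whenever w ≼ v. Then for every h ∈ H, the stabilizer stab(h) is closed under pieces: if u ∈ stab(h) and u' ≼ u, then u' ∈ stab(h). -/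
/-- Let `V` be a finite monoid acting on a set `H`, `n` an idempotent exponent of `V`,
and `≼` a transitive relation on `V` with `v ≼ u*v*w` for all `u,v,w` and satisfying
the Δ₂ identity `v^n * w * v^n = v^n` whenever `w ≼ v`. Then every stabilizer is
closed under pieces: `u ∈ stab(h)` and `u' ≼ u` imply `u' ∈ stab(h)`. -/
theorem stab_closed_under_pieces {V H : Type*} [Monoid V] [Finite V] [MulAction V H]
    (n : ℕ) (hn : 0 < n)
    (hidem : ∀ x : V, x ^ n * x ^ n = x ^ n)
    (r : V → V → Prop)
    (htrans : ∀ x y z : V, r x y → r y z → r x z)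
    (hpiece : ∀ u v w : V, r v (u * v * w))
    (hΔ : ∀ v w : V, r w v → v ^ n * w * v ^ n = v ^ n) :
    ∀ h : H, ∀ u u' : V, u ∈ stab V h → r u' u → u' ∈ stab V h := by
  intro h u u' hu hr
  obtain ⟨⟨_, _⟩, ⟨w, hw⟩⟩ := hu
  set a := w * u with ha
  have hah : a • h = h := by rw [ha, mul_smul, ← hw]
  have hanh' : ∀ m : ℕ, a ^ m • h = h := by
    intro m
    induction m with
    | zero => simp
    | succ k ih => rw [pow_succ, mul_smul, hah, ih]
  have hanh : a ^ n • h = h := hanh' n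
  have hra : r u' a := htrans _ _ _ hr (by simpa using hpiece w u 1)
  have hΔa : a ^ n * u' * a ^ n = a ^ n := hΔ a u' hra
  constructor
  · exact ⟨u', rfl⟩
  · refine ⟨a ^ n, ?_⟩
    calc h = a ^ n • h := hanh.symm
    _ = (a ^ n * u' * a ^ n) • h := by rw [hΔa]
    _ = a ^ n • (u' • (a ^ n • h)) := by rw [mul_smul, mul_smul]
    _ = a ^ n • (u' • h) := by rw [hanh]
end

section
/- Let A be an alphabet (an arbitrary type, possibly infinite), M a finite monoid with idempotent exponent n satisfying the DA identity for n, and β : A* → M a monoid morphism. Let m ∈ M with m ≠ 1. Then V_m equals the union, over all p, k ∈ M and letters a ∈ A such that p ∼_R k, k is not ∼_R-equivalent to m, and k*β(a) = m, of the concatenations V_p · {w ∈ A* : p*β(w) = k} · {[a]}. -/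
/-- The language `V_m`: words `w` with `β(w) = m` such that no proper prefix of `w`
has an image `∼_R`-equivalent to `m`. -/
def Vlang {A M : Type*} [Monoid M] (β : List A → M) (m : M) : Set (List A) :=
  {w | β w = m ∧ ∀ u : List A, u <+: w → u ≠ w → ¬ rEquiv (β u) m}

lemma rLe_refl {M : Type*} [Monoid M] (m : M) : rLe m m := ⟨1, (mul_one m).symm⟩

lemma rLe_trans {M : Type*} [Monoid M] {a b c : M} (h1 : rLe a b) (h2 : rLe b c) :
    rLe a c := by
  obtain ⟨k, rfl⟩ := h1; obtain ⟨k', rfl⟩ := h2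
  exact ⟨k' * k, mul_assoc _ _ _⟩

lemma rEquiv_refl {M : Type*} [Monoid M] (m : M) : rEquiv m m := ⟨rLe_refl m, rLe_refl m⟩

lemma rEquiv_trans {M : Type*} [Monoid M] {a b c : M} (h1 : rEquiv a b) (h2 : rEquiv b c) :
    rEquiv a c := ⟨rLe_trans h1.1 h2.1, rLe_trans h2.2 h1.2⟩

lemma prefix_of_concat {A : Type*} {x l : List A} {a : A}
    (h : x <+: l ++ [a]) (hne : x ≠ l ++ [a]) : x <+: l := by
  obtain ⟨t, ht⟩ := h
  rcases List.eq_nil_or_concat t with rfl | ⟨t', b, rfl⟩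
  · simp at ht; exact absurd ht hne
  · rw [List.concat_eq_append, ← List.append_assoc] at ht
    exact ⟨t', ((List.append_inj' ht rfl).1)⟩

/-- Let `β : A* → M` be a monoid morphism into a finite monoid with idempotent
exponent `n` satisfying the DA identity for `n`, and let `m ≠ 1`. Then `V_m` equals
the union, over all `p, k ∈ M` and letters `a` with `p ∼_R k`, `k` not
`∼_R`-equivalent to `m`, and `k·β(a) = m`, of the concatenations
`V_p · {w : p·β(w) = k} · {[a]}`. -/
theorem vlang_decomposition {A M : Type*} [Monoid M] [Finite M]
    (n : ℕ) (hn : 0 < n)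
    (hidem : ∀ x : M, x ^ n * x ^ n = x ^ n)
    (hDA : ∀ m k : M, (m * k) ^ n * m * (m * k) ^ n = (m * k) ^ n)
    (β : List A → M) (hβ1 : β [] = 1)
    (hβmul : ∀ u v : List A, β (u ++ v) = β u * β v)
    (m : M) (hm : m ≠ 1) :
    Vlang β m =
      {w : List A | ∃ p k : M, ∃ a : A,
        rEquiv p k ∧ ¬ rEquiv k m ∧ k * β [a] = m ∧
        ∃ u ∈ Vlang β p, ∃ v : List A, p * β v = k ∧ w = u ++ v ++ [a]} := by
  classical
  ext w
  constructor
  · rintro ⟨hwβ, hwpre⟩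
    -- w is nonempty
    rcases List.eq_nil_or_concat w with rfl | ⟨w', a, rfl⟩
    · exact absurd (hβ1.symm.trans hwβ).symm hm
    rw [List.concat_eq_append] at *
    set k := β w' with hk
    have hkm : ¬ rEquiv k m := by
      refine hwpre w' ⟨[a], rfl⟩ ?_
      intro h
      exact absurd (congrArg List.length h) (by simp)
    have hkam : k * β [a] = m := by rw [hk, ← hβmul, hwβ]
    -- find shortest prefix of w' whose image is R-equivalent to k
    have hex : ∃ i, i ≤ w'.length ∧ rEquiv (β (w'.take i)) k := by
      exact ⟨w'.length, le_refl _, by rw [List.take_length]; exact rEquiv_refl k⟩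
    set i₀ := Nat.find hex with hi₀
    obtain ⟨hi₀le, hi₀eq⟩ := Nat.find_spec hex
    have hmin : ∀ j < i₀, ¬ rEquiv (β (w'.take j)) k := by
      intro j hj hcon
      exact Nat.find_min hex hj ⟨le_of_lt (lt_of_lt_of_le hj hi₀le), hcon⟩
    set u := w'.take i₀ with hu
    set v := w'.drop i₀ with hv
    set p := β u with hp
    refine ⟨p, k, a, hi₀eq, hkm, hkam, u, ⟨rfl, ?_⟩, v, ?_, ?_⟩
    · -- no proper prefix of u is R-equivalent to p
      intro y hy hyne hcon
      have hyt : y = u.take y.length := (List.prefix_iff_eq_take.mp hy)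
      have hulen : u.length = i₀ := by
        rw [hu, List.length_take]; exact min_eq_left hi₀le
      have hylt : y.length < i₀ := by
        rcases lt_or_eq_of_le ((List.IsPrefix.length_le hy).trans_eq hulen) with h | h
        · exact h
        · exfalso; apply hyne
          rw [hyt, h, ← hulen, List.take_length]
      have : y = w'.take y.length := by
        conv_lhs => rw [hyt]
        rw [hu, List.take_take, min_eq_left (le_of_lt hylt)]
      apply hmin y.length hylt
      rw [← this]
      exact rEquiv_trans hcon hi₀eq
    · rw [hp, ← hβmul, hu, hv, List.take_append_drop]
    · rw [hu, hv, List.take_append_drop]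
  · rintro ⟨p, k, a, hpk, hkm, hkam, u, ⟨huβ, hupre⟩, v, hpv, rfl⟩
    have hw : β (u ++ v ++ [a]) = m := by
      rw [hβmul, hβmul, huβ, hpv, hkam]
    refine ⟨hw, ?_⟩
    intro x hx hxne hcon
    have hxuv : x <+: u ++ v := prefix_of_concat hx hxne
    obtain ⟨t, ht⟩ := hxuv
    have hkx : rLe k (β x) := by
      refine ⟨β t, ?_⟩
      rw [← hβmul, ht, hβmul, huβ, hpv]
    have : rEquiv k m := ⟨rLe_trans hkx hcon.1, ⟨β [a], hkam.symm⟩⟩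
    exact hkm this
end

section
/- Let A be an alphabet (an arbitrary type, possibly infinite), M a finite monoid, ≼ a preorder on M, and β : A* → M a monoid morphism. Then the class of languages over A that are finite unions of Σ₂ word expressions (relative to β and ≼) is closed under union, intersection, and language concatenation. -/
/-- Words all of whose letters have a `β`-image in `N`. -/
def starLang {A M : Type*} (β : List A → M) (N : Set M) : Set (List A) :=
  {w | ∀ a ∈ w, β [a] ∈ N}

/-- One-letter words whose `β`-image is `m`. -/
def letterLang {A M : Type*} (β : List A → M) (m : M) : Set (List A) :=
  {w | ∃ a : A, w = [a] ∧ β [a] = m}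

/-- Concatenation of two languages. -/
def catLang {A : Type*} (L₁ L₂ : Set (List A)) : Set (List A) :=
  {w | ∃ u ∈ L₁, ∃ v ∈ L₂, w = u ++ v}

/-- A Σ₂ word expression relative to `β` and a preorder `r` on `M`:
a language of the form `A₀* B₁ A₁* ⋯ B_k A_k*`, where each `B_j` is the set of
one-letter words with a fixed `β`-image `n_j`, and each `A_i*` is the set of words
all of whose letters have `β`-image in a fixed subset `N_i ⊆ M` downward closed
under `r`. -/
inductive IsSigma2 {A M : Type*} (β : List A → M) (r : M → M → Prop) :
    Set (List A) → Prop
  | star (N : Set M) (hN : ∀ k m : M, r k m → m ∈ N → k ∈ N) :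
      IsSigma2 β r (starLang β N)
  | block (N : Set M) (hN : ∀ k m : M, r k m → m ∈ N → k ∈ N) (m : M)
      (L : Set (List A)) (hL : IsSigma2 β r L) :
      IsSigma2 β r (catLang (starLang β N) (catLang (letterLang β m) L))

/-- A finite union of Σ₂ word expressions. -/
def IsFinUnionSigma2 {A M : Type*} (β : List A → M) (r : M → M → Prop)
    (L : Set (List A)) : Prop :=
  ∃ (k : ℕ) (f : Fin k → Set (List A)),
    (∀ i, IsSigma2 β r (f i)) ∧ L = ⋃ i, f i

namespace Sigma2Aux

variable {A M : Type*} {β : List A → M} {r : M → M → Prop}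

/-! ### Basic membership lemmas -/

lemma mem_cat {L₁ L₂ : Set (List A)} {w : List A} :
    w ∈ catLang L₁ L₂ ↔ ∃ u ∈ L₁, ∃ v ∈ L₂, w = u ++ v := Iff.rfl

lemma mem_star {N : Set M} {w : List A} :
    w ∈ starLang β N ↔ ∀ a ∈ w, β [a] ∈ N := Iff.rfl

lemma mem_block_iff {N : Set M} {m : M} {L : Set (List A)} {w : List A} :
    w ∈ catLang (starLang β N) (catLang (letterLang β m) L) ↔
      ∃ u a v, w = u ++ a :: v ∧ (∀ b ∈ u, β [b] ∈ N) ∧ β [a] = m ∧ v ∈ L := by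
  constructor
  · rintro ⟨u, hu, x, ⟨y, ⟨a, rfl, ha⟩, v, hv, rfl⟩, rfl⟩
    exact ⟨u, a, v, rfl, hu, ha, hv⟩
  · rintro ⟨u, a, v, rfl, hu, ha, hv⟩
    exact ⟨u, hu, a :: v, ⟨[a], ⟨a, rfl, ha⟩, v, hv, rfl⟩, rfl⟩

lemma catLang_assoc (L₁ L₂ L₃ : Set (List A)) :
    catLang (catLang L₁ L₂) L₃ = catLang L₁ (catLang L₂ L₃) := by
  ext w
  constructor
  · rintro ⟨x, ⟨u, hu, v, hv, rfl⟩, t, ht, rfl⟩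
    exact ⟨u, hu, v ++ t, ⟨v, hv, t, ht, rfl⟩, by simp⟩
  · rintro ⟨u, hu, x, ⟨v, hv, t, ht, rfl⟩, rfl⟩
    exact ⟨u ++ v, ⟨u, hu, v, hv, rfl⟩, t, ht, by simp⟩

lemma catLang_iUnion_left {ι : Sort*} (f : ι → Set (List A)) (L : Set (List A)) :
    catLang (⋃ i, f i) L = ⋃ i, catLang (f i) L := by
  ext w
  simp only [Set.mem_iUnion, mem_cat]
  constructor
  · rintro ⟨u, ⟨i, hu⟩, v, hv, rfl⟩; exact ⟨i, u, hu, v, hv, rfl⟩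
  · rintro ⟨i, u, hu, v, hv, rfl⟩; exact ⟨u, ⟨i, hu⟩, v, hv, rfl⟩

lemma catLang_iUnion_right {ι : Sort*} (L : Set (List A)) (f : ι → Set (List A)) :
    catLang L (⋃ i, f i) = ⋃ i, catLang L (f i) := by
  ext w
  simp only [Set.mem_iUnion, mem_cat]
  constructor
  · rintro ⟨u, hu, v, ⟨i, hv⟩, rfl⟩; exact ⟨i, u, hu, v, hv, rfl⟩
  · rintro ⟨i, u, hu, v, hv, rfl⟩; exact ⟨u, hu, v, ⟨i, hv⟩, rfl⟩

/-! ### Finite-union machinery -/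

lemma finUnion_of_sigma2 {L : Set (List A)} (h : IsSigma2 β r L) :
    IsFinUnionSigma2 β r L :=
  ⟨1, fun _ => L, fun _ => h, by rw [Set.iUnion_const]⟩

lemma finUnion_empty : IsFinUnionSigma2 β r (∅ : Set (List A)) :=
  ⟨0, fun i => ∅, fun i => i.elim0, by simp⟩

lemma finUnion_iUnion {ι : Type*} [Finite ι] (f : ι → Set (List A))
    (hf : ∀ i, IsFinUnionSigma2 β r (f i)) : IsFinUnionSigma2 β r (⋃ i, f i) := by
  choose k g hg hfg using hf
  obtain ⟨n, ⟨e⟩⟩ := Finite.exists_equiv_fin (Σ i, Fin (k i))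
  refine ⟨n, fun p => g (e.symm p).1 (e.symm p).2, fun p => hg _ _, ?_⟩
  have h1 : (⋃ i, f i) = ⋃ q : Σ i, Fin (k i), g q.1 q.2 := by
    rw [Set.iUnion_sigma]
    exact Set.iUnion_congr hfg
  rw [h1]
  exact (e.symm.surjective.iUnion_comp (fun q => g q.1 q.2)).symm

lemma finUnion_union {L₁ L₂ : Set (List A)} (h1 : IsFinUnionSigma2 β r L₁)
    (h2 : IsFinUnionSigma2 β r L₂) : IsFinUnionSigma2 β r (L₁ ∪ L₂) := by
  rw [Set.union_eq_iUnion]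
  exact finUnion_iUnion _ (by rintro (_ | _) <;> simpa)

lemma finUnion_prop (p : Prop) {L : Set (List A)} (h : p → IsFinUnionSigma2 β r L) :
    IsFinUnionSigma2 β r (⋃ _ : p, L) := by
  by_cases hp : p
  · simpa [hp] using h hp
  · rw [show (⋃ _ : p, L) = ∅ by simp [hp]]
    exact finUnion_empty

lemma finUnion_block (N : Set M) (hN : ∀ k m : M, r k m → m ∈ N → k ∈ N) (m : M)
    {L : Set (List A)} (hL : IsFinUnionSigma2 β r L) :
    IsFinUnionSigma2 β r (catLang (starLang β N) (catLang (letterLang β m) L)) := by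
  obtain ⟨k, f, hf, rfl⟩ := hL
  rw [catLang_iUnion_right, catLang_iUnion_right]
  exact ⟨k, _, fun i => IsSigma2.block N hN m _ (hf i), rfl⟩

/-! ### Splitting lemma for lists -/

lemma split_eq {u v u' v' : List A} {a a' : A} (h : u ++ a :: v = u' ++ a' :: v') :
    (u = u' ∧ a = a' ∧ v = v') ∨
    (∃ t, u' = u ++ a :: t ∧ v = t ++ a' :: v') ∨
    (∃ t, u = u' ++ a' :: t ∧ v' = t ++ a :: v) := by
  induction u generalizing u' with
  | nil =>
    cases u' with
    | nil =>
      simp only [List.nil_append, List.cons.injEq] at h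
      exact Or.inl ⟨rfl, h.1, h.2⟩
    | cons b u₁ =>
      simp only [List.nil_append, List.cons_append, List.cons.injEq] at h
      exact Or.inr (Or.inl ⟨u₁, by simp [h.1], h.2⟩)
  | cons b u₀ ih =>
    cases u' with
    | nil =>
      simp only [List.cons_append, List.nil_append, List.cons.injEq] at h
      exact Or.inr (Or.inr ⟨u₀, by simp [h.1], h.2.symm⟩)
    | cons c u₁ =>
      simp only [List.cons_append, List.cons.injEq] at h
      obtain ⟨rfl, h2⟩ := h
      rcases ih h2 with ⟨rfl, rfl, rfl⟩ | ⟨t, rfl, rfl⟩ | ⟨t, rfl, rfl⟩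
      · exact Or.inl ⟨rfl, rfl, rfl⟩
      · exact Or.inr (Or.inl ⟨t, rfl, rfl⟩)
      · exact Or.inr (Or.inr ⟨t, rfl, rfl⟩)

/-! ### Concatenation of Σ₂ expressions -/

/-- `A* · L = L ∪ ⋃_{n ∈ N} A* · n · L`. -/
lemma catLang_star_eq (N : Set M) (L : Set (List A)) :
    catLang (starLang β N) L =
      L ∪ ⋃ n : M, ⋃ _ : n ∈ N,
        catLang (starLang β N) (catLang (letterLang β n) L) := by
  ext w
  constructor
  · rintro ⟨u, hu, v, hv, rfl⟩
    rcases List.eq_nil_or_concat u with rfl | ⟨u₀, a, rfl⟩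
    · exact Or.inl hv
    · refine Or.inr (Set.mem_iUnion.2 ⟨β [a], Set.mem_iUnion.2 ⟨hu a (by simp), ?_⟩⟩)
      refine mem_block_iff.2 ⟨u₀, a, v, by simp, fun b hb => hu b (by simp [hb]), rfl, hv⟩
  · rintro (h | h)
    · exact ⟨[], fun a ha => by simp at ha, w, h, by simp⟩
    · simp only [Set.mem_iUnion] at h
      obtain ⟨n, hn, h⟩ := h
      obtain ⟨u, a, v, rfl, hu, ha, hv⟩ := mem_block_iff.1 h
      refine ⟨u ++ [a], ?_, v, hv, by simp⟩
      intro b hb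
      rcases List.mem_append.1 hb with hb | hb
      · exact hu b hb
      · simp only [List.mem_singleton] at hb
        subst hb
        exact ha ▸ hn

lemma cat_sigma2 [Finite M] {L₁ : Set (List A)} (h1 : IsSigma2 β r L₁) :
    ∀ L₂ : Set (List A), IsSigma2 β r L₂ → IsFinUnionSigma2 β r (catLang L₁ L₂) := by
  induction h1 with
  | star N hN =>
    intro L₂ h2
    rw [catLang_star_eq N L₂]
    refine finUnion_union (finUnion_of_sigma2 h2) ?_
    refine finUnion_iUnion _ fun n => finUnion_prop _ fun hn => ?_
    exact finUnion_of_sigma2 (IsSigma2.block N hN n _ h2)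
  | block N hN m τ hτ ih =>
    intro L₂ h2
    rw [catLang_assoc, catLang_assoc]
    exact finUnion_block N hN m (ih L₂ h2)

/-! ### Intersection of Σ₂ expressions -/

lemma star_inter_star (N N' : Set M) :
    starLang β N ∩ starLang β N' = starLang β (N ∩ N') := by
  ext w
  simp only [Set.mem_inter_iff, mem_star, Set.mem_inter_iff]
  aesop

lemma downClosed_inter {N N' : Set M} (hN : ∀ k m : M, r k m → m ∈ N → k ∈ N)
    (hN' : ∀ k m : M, r k m → m ∈ N' → k ∈ N') :
    ∀ k m : M, r k m → m ∈ N ∩ N' → k ∈ N ∩ N' :=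
  fun k m h hm => ⟨hN k m h hm.1, hN' k m h hm.2⟩

lemma star_inter_block (N N' : Set M) (m' : M) (τ' : Set (List A)) :
    starLang β N ∩ catLang (starLang β N') (catLang (letterLang β m') τ') =
      ⋃ _ : m' ∈ N, catLang (starLang β (N ∩ N'))
        (catLang (letterLang β m') (starLang β N ∩ τ')) := by
  ext w
  constructor
  · rintro ⟨hwN, hwB⟩
    obtain ⟨u, a, v, rfl, hu, ha, hv⟩ := mem_block_iff.1 hwB
    have hm' : m' ∈ N := ha ▸ hwN a (by simp)
    refine Set.mem_iUnion.2 ⟨hm', mem_block_iff.2 ⟨u, a, v, rfl, ?_, ha, ?_, hv⟩⟩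
    · exact fun b hb => ⟨hwN b (by simp [hb]), hu b hb⟩
    · exact fun b hb => hwN b (by simp [hb])
  · intro h
    simp only [Set.mem_iUnion] at h
    obtain ⟨hm', h⟩ := h
    obtain ⟨u, a, v, rfl, hu, ha, hv⟩ := mem_block_iff.1 h
    constructor
    · intro b hb
      rcases List.mem_append.1 hb with hb | hb
      · exact (hu b hb).1
      · rcases List.mem_cons.1 hb with rfl | hb
        · exact ha ▸ hm'
        · exact hv.1 b hb
    · exact mem_block_iff.2 ⟨u, a, v, rfl, fun b hb => (hu b hb).2, ha, hv.2⟩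

lemma block_inter_star (N N' : Set M) (m : M) (τ : Set (List A)) :
    catLang (starLang β N) (catLang (letterLang β m) τ) ∩ starLang β N' =
      ⋃ _ : m ∈ N', catLang (starLang β (N ∩ N'))
        (catLang (letterLang β m) (τ ∩ starLang β N')) := by
  rw [Set.inter_comm, star_inter_block N' N m τ, Set.inter_comm N' N, Set.inter_comm τ]

lemma block_inter_block (N N' : Set M) (m m' : M) (τ τ' : Set (List A)) :
    catLang (starLang β N) (catLang (letterLang β m) τ) ∩
      catLang (starLang β N') (catLang (letterLang β m') τ') =
    (⋃ _ : m = m', catLang (starLang β (N ∩ N'))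
        (catLang (letterLang β m) (τ ∩ τ'))) ∪
    (⋃ _ : m ∈ N', catLang (starLang β (N ∩ N'))
        (catLang (letterLang β m)
          (τ ∩ catLang (starLang β N') (catLang (letterLang β m') τ')))) ∪
    (⋃ _ : m' ∈ N, catLang (starLang β (N ∩ N'))
        (catLang (letterLang β m')
          (catLang (starLang β N) (catLang (letterLang β m) τ) ∩ τ'))) := by
  ext w
  constructor
  · rintro ⟨h1, h2⟩
    obtain ⟨u, a, v, rfl, hu, ha, hv⟩ := mem_block_iff.1 h1
    obtain ⟨u', a', v', heq, hu', ha', hv'⟩ := mem_block_iff.1 h2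
    rcases split_eq heq with ⟨rfl, rfl, rfl⟩ | ⟨t, rfl, rfl⟩ | ⟨t, rfl, rfl⟩
    · refine Or.inl (Or.inl (Set.mem_iUnion.2 ⟨ha ▸ ha' ▸ rfl, ?_⟩))
      exact mem_block_iff.2 ⟨u, a, v, rfl, fun b hb => ⟨hu b hb, hu' b hb⟩, ha, hv, hv'⟩
    · -- u' = u ++ a :: t, v = t ++ a' :: v'
      have hmN' : m ∈ N' := ha ▸ hu' a (by simp)
      refine Or.inl (Or.inr (Set.mem_iUnion.2 ⟨hmN', ?_⟩))
      refine mem_block_iff.2 ⟨u, a, t ++ a' :: v', rfl,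
        fun b hb => ⟨hu b hb, hu' b (by simp [hb])⟩, ha, hv, ?_⟩
      exact mem_block_iff.2 ⟨t, a', v', rfl, fun b hb => hu' b (by simp [hb]), ha', hv'⟩
    · -- u = u' ++ a' :: t, v' = t ++ a :: v
      have hm'N : m' ∈ N := ha' ▸ hu a' (by simp)
      refine Or.inr (Set.mem_iUnion.2 ⟨hm'N, ?_⟩)
      refine mem_block_iff.2 ⟨u', a', t ++ a :: v, by simp,
        fun b hb => ⟨hu b (by simp [hb]), hu' b hb⟩, ha', ?_, hv'⟩
      exact mem_block_iff.2 ⟨t, a, v, rfl, fun b hb => hu b (by simp [hb]), ha, hv⟩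
  · rintro ((h | h) | h) <;> simp only [Set.mem_iUnion] at h
    · obtain ⟨rfl, h⟩ := h
      obtain ⟨u, a, v, rfl, hu, ha, hv1, hv2⟩ := mem_block_iff.1 h
      exact ⟨mem_block_iff.2 ⟨u, a, v, rfl, fun b hb => (hu b hb).1, ha, hv1⟩,
        mem_block_iff.2 ⟨u, a, v, rfl, fun b hb => (hu b hb).2, ha, hv2⟩⟩
    · obtain ⟨hmN', h⟩ := h
      obtain ⟨u, a, v, rfl, hu, ha, hv1, hv2⟩ := mem_block_iff.1 h
      refine ⟨mem_block_iff.2 ⟨u, a, v, rfl, fun b hb => (hu b hb).1, ha, hv1⟩, ?_⟩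
      obtain ⟨t, a', v', rfl, ht, ha', hv'⟩ := mem_block_iff.1 hv2
      refine mem_block_iff.2 ⟨u ++ a :: t, a', v', by simp, ?_, ha', hv'⟩
      intro b hb
      rcases List.mem_append.1 hb with hb | hb
      · exact (hu b hb).2
      · rcases List.mem_cons.1 hb with rfl | hb
        · exact ha ▸ hmN'
        · exact ht b hb
    · obtain ⟨hm'N, h⟩ := h
      obtain ⟨u, a', v, rfl, hu, ha', hv1, hv2⟩ := mem_block_iff.1 h
      obtain ⟨t, a, v', rfl, ht, ha, hv'⟩ := mem_block_iff.1 hv1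
      refine ⟨?_, mem_block_iff.2 ⟨u, a', t ++ a :: v', rfl,
        fun b hb => (hu b hb).2, ha', hv2⟩⟩
      refine mem_block_iff.2 ⟨u ++ a' :: t, a, v', by simp, ?_, ha, hv'⟩
      intro b hb
      rcases List.mem_append.1 hb with hb | hb
      · exact (hu b hb).1
      · rcases List.mem_cons.1 hb with rfl | hb
        · exact ha' ▸ hm'N
        · exact ht b hb

lemma inter_sigma2 {L₁ : Set (List A)} (h1 : IsSigma2 β r L₁) :
    ∀ L₂ : Set (List A), IsSigma2 β r L₂ → IsFinUnionSigma2 β r (L₁ ∩ L₂) := by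
  induction h1 with
  | star N hN =>
    intro L₂ h2
    induction h2 with
    | star N' hN' =>
      rw [star_inter_star]
      exact finUnion_of_sigma2 (IsSigma2.star _ (downClosed_inter hN hN'))
    | block N' hN' m' τ' hτ' ih' =>
      rw [star_inter_block]
      exact finUnion_prop _ fun _ =>
        finUnion_block _ (downClosed_inter hN hN') m' ih'
  | block N hN m τ hτ ih =>
    intro L₂ h2
    induction h2 with
    | star N' hN' =>
      rw [block_inter_star]
      exact finUnion_prop _ fun _ =>
        finUnion_block _ (downClosed_inter hN hN') m
          (ih _ (IsSigma2.star N' hN'))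
    | block N' hN' m' τ' hτ' ih' =>
      rw [block_inter_block]
      refine finUnion_union (finUnion_union ?_ ?_) ?_
      · exact finUnion_prop _ fun _ =>
          finUnion_block _ (downClosed_inter hN hN') m (ih _ hτ')
      · exact finUnion_prop _ fun _ =>
          finUnion_block _ (downClosed_inter hN hN') m
            (ih _ (IsSigma2.block N' hN' m' τ' hτ'))
      · exact finUnion_prop _ fun _ =>
          finUnion_block _ (downClosed_inter hN hN') m' ih'

end Sigma2Aux

open Sigma2Aux in
/-- Let `β : A* → M` be a monoid morphism into a finite monoid `M` equipped with a
preorder `≼`. Then the class of finite unions of Σ₂ word expressions is closed under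
union, intersection and language concatenation. -/
theorem finUnionSigma2_closure {A M : Type*} [Monoid M] [Finite M]
    (r : M → M → Prop)
    (hrefl : ∀ x : M, r x x)
    (htrans : ∀ x y z : M, r x y → r y z → r x z)
    (β : List A → M) (hβ1 : β [] = 1)
    (hβmul : ∀ u v : List A, β (u ++ v) = β u * β v) :
    (∀ L₁ L₂ : Set (List A), IsFinUnionSigma2 β r L₁ → IsFinUnionSigma2 β r L₂ →
      IsFinUnionSigma2 β r (L₁ ∪ L₂)) ∧
    (∀ L₁ L₂ : Set (List A), IsFinUnionSigma2 β r L₁ → IsFinUnionSigma2 β r L₂ →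
      IsFinUnionSigma2 β r (L₁ ∩ L₂)) ∧
    (∀ L₁ L₂ : Set (List A), IsFinUnionSigma2 β r L₁ → IsFinUnionSigma2 β r L₂ →
      IsFinUnionSigma2 β r (catLang L₁ L₂)) := by
  refine ⟨fun L₁ L₂ h1 h2 => finUnion_union h1 h2, ?_, ?_⟩
  · rintro L₁ L₂ ⟨k, f, hf, rfl⟩ ⟨k', g, hg, rfl⟩
    rw [Set.iUnion_inter, show (⋃ i, (f i ∩ ⋃ j, g j)) = ⋃ p : Fin k × Fin k', f p.1 ∩ g p.2 by
      rw [Set.iUnion_prod']; exact Set.iUnion_congr fun i => Set.inter_iUnion _ _]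
    exact finUnion_iUnion _ fun p => inter_sigma2 (hf p.1) _ (hg p.2)
  · rintro L₁ L₂ ⟨k, f, hf, rfl⟩ ⟨k', g, hg, rfl⟩
    rw [catLang_iUnion_left, show (⋃ i, catLang (f i) (⋃ j, g j)) =
        ⋃ p : Fin k × Fin k', catLang (f p.1) (g p.2) by
      rw [Set.iUnion_prod']; exact Set.iUnion_congr fun i => catLang_iUnion_right _ _]
    exact finUnion_iUnion _ fun p => cat_sigma2 (hf p.1) _ (hg p.2)
end
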